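/- Let V be a 4-dimensional real vector space equipped with a nondegenerate symmetric bilinear form g. For every double (1,2)-form A on V (a rank-3 tensor with A_{abc} = −A_{acb}), the trace of its basic superenergy tensor over the last pair of indices vanishes: g^{cd} T_{abcd}{A} = 0. -/
import Mathlib


noncomputable section

open scoped BigOperators
open Matrix

/-- Basic superenergy tensor T_{abcd}{A} of a double (1,2)-form A on a
4-dimensional real vector space (in components with respect to a basis), with
metric components gm and inverse metric components gi:
T_{abcd} = -A_{acf}A_{bd}{}^f - A_{adf}A_{bc}{}^f + g_{ab}A_{ecf}A^e{}_d{}^f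
           + (1/2) g_{cd}A_{aef}A_b{}^{ef} - (1/4) g_{ab}g_{cd}A_{efg}A^{efg}. -/
def SE (gm gi : Fin 4 → Fin 4 → ℝ) (A : Fin 4 → Fin 4 → Fin 4 → ℝ)
    (a b c d : Fin 4) : ℝ :=
  - (∑ f, ∑ k, A a c f * gi f k * A b d k)
  - (∑ f, ∑ k, A a d f * gi f k * A b c k)
  + gm a b * (∑ e, ∑ i, ∑ f, ∑ k, gi e i * gi f k * A e c f * A i d k)
  + (1/2) * gm c d * (∑ e, ∑ i, ∑ f, ∑ k, gi e i * gi f k * A a e f * A b i k)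
  - (1/4) * gm a b * gm c d *
      (∑ e, ∑ i, ∑ f, ∑ k, ∑ p, ∑ q, gi e i * gi f k * gi p q * A e f p * A i k q)

set_option maxHeartbeats 1000000 in
/-- On a 4-dimensional real vector space with a nondegenerate symmetric bilinear
form g (given in components, with inverse ginv), the trace over the last pair of
indices of the basic superenergy tensor of any double (1,2)-form A
(A_{abc} = -A_{acb}) vanishes: g^{cd} T_{abcd}{A} = 0. -/
theorem superenergy_last_trace_vanishes
    (g ginv : Fin 4 → Fin 4 → ℝ)
    (hgsym : ∀ a b, g a b = g b a)
    (hinv : ∀ a b : Fin 4, (∑ k, g a k * ginv k b) = if a = b then (1:ℝ) else 0)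
    (A : Fin 4 → Fin 4 → Fin 4 → ℝ)
    (hA : ∀ a b c, A a b c = - A a c b) :
    ∀ a b : Fin 4, (∑ c, ∑ d, ginv c d * SE g ginv A a b c d) = 0 := by
  -- matrix facts
  have hmul : (Matrix.of g * Matrix.of ginv) = 1 := by
    ext a b
    simpa [Matrix.mul_apply, Matrix.one_apply] using hinv a b
  have hT : (Matrix.of g)ᵀ = Matrix.of g := by
    ext a b; exact hgsym b a
  have h1T : (Matrix.of ginv)ᵀ * Matrix.of g = 1 := by
    have := congrArg Matrix.transpose hmul
    rwa [Matrix.transpose_mul, hT, Matrix.transpose_one] at this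
  have h2T : (Matrix.of ginv)ᵀ = Matrix.of ginv := by
    calc (Matrix.of ginv)ᵀ = (Matrix.of ginv)ᵀ * (Matrix.of g * Matrix.of ginv) := by
          rw [hmul, mul_one]
      _ = ((Matrix.of ginv)ᵀ * Matrix.of g) * Matrix.of ginv := by rw [mul_assoc]
      _ = Matrix.of ginv := by rw [h1T, one_mul]
  have hgisym : ∀ a b, ginv a b = ginv b a := by
    intro a b
    exact (congrFun (congrFun h2T a) b).symm
  have htr : (∑ c, ∑ d, ginv c d * g c d) = 4 := by
    have h4 : ∀ c : Fin 4, (∑ d, ginv c d * g c d) = 1 := by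
      intro c
      calc (∑ d, ginv c d * g c d) = ∑ d, g c d * ginv d c := by
            refine Finset.sum_congr rfl fun d _ => ?_
            rw [hgisym c d]; ring
        _ = 1 := by simpa using hinv c c
    simp [h4]
  intro a b
  set S : ℝ := ∑ e, ∑ i, ∑ f, ∑ k, ginv e i * ginv f k * A a e f * A b i k with hS
  set X : ℝ := ∑ e, ∑ i, ∑ f, ∑ k, ∑ p, ∑ q,
      ginv e i * ginv f k * ginv p q * A e f p * A i k q with hX
  have h1 : (∑ c, ∑ d, ginv c d * (∑ f, ∑ k, A a c f * ginv f k * A b d k)) = S := by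
    rw [hS]
    refine Finset.sum_congr rfl fun c _ => ?_
    refine Finset.sum_congr rfl fun d _ => ?_
    simp only [Finset.mul_sum]
    refine Finset.sum_congr rfl fun f _ => ?_
    refine Finset.sum_congr rfl fun k _ => ?_
    ring
  have h2 : (∑ c, ∑ d, ginv c d * (∑ f, ∑ k, A a d f * ginv f k * A b c k)) = S := by
    rw [hS, Finset.sum_comm]
    refine Finset.sum_congr rfl fun c _ => ?_
    refine Finset.sum_congr rfl fun d _ => ?_
    simp only [Finset.mul_sum]
    rw [hgisym d c]
    refine Finset.sum_congr rfl fun f _ => ?_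
    refine Finset.sum_congr rfl fun k _ => ?_
    ring
  have h3 : (∑ c, ∑ d, ginv c d *
      (∑ e, ∑ i, ∑ f, ∑ k, ginv e i * ginv f k * A e c f * A i d k)) = X := by
    rw [hX]
    simp only [Finset.mul_sum]
    conv_lhs => enter [2, c]; rw [Finset.sum_comm]
    rw [Finset.sum_comm]
    conv_lhs => enter [2, e, 2, c]; rw [Finset.sum_comm]
    conv_lhs => enter [2, e]; rw [Finset.sum_comm]
    refine Finset.sum_congr rfl fun e _ => Finset.sum_congr rfl fun i _ =>
      Finset.sum_congr rfl fun c _ => Finset.sum_congr rfl fun d _ =>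
      Finset.sum_congr rfl fun f _ => Finset.sum_congr rfl fun k _ => by ring
  have hsplit : ∀ c d : Fin 4, ginv c d * SE g ginv A a b c d =
      -(ginv c d * (∑ f, ∑ k, A a c f * ginv f k * A b d k))
      - (ginv c d * (∑ f, ∑ k, A a d f * ginv f k * A b c k))
      + g a b * (ginv c d * (∑ e, ∑ i, ∑ f, ∑ k, ginv e i * ginv f k * A e c f * A i d k))
      + (1/2) * S * (ginv c d * g c d)
      - (1/4) * g a b * X * (ginv c d * g c d) := by
    intro c d
    rw [SE, hS, hX]
    ring
  calc (∑ c, ∑ d, ginv c d * SE g ginv A a b c d)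
      = ∑ c, ∑ d, (-(ginv c d * (∑ f, ∑ k, A a c f * ginv f k * A b d k))
      - (ginv c d * (∑ f, ∑ k, A a d f * ginv f k * A b c k))
      + g a b * (ginv c d * (∑ e, ∑ i, ∑ f, ∑ k, ginv e i * ginv f k * A e c f * A i d k))
      + (1/2) * S * (ginv c d * g c d)
      - (1/4) * g a b * X * (ginv c d * g c d)) := by
        refine Finset.sum_congr rfl fun c _ => Finset.sum_congr rfl fun d _ => hsplit c d
    _ = -(∑ c, ∑ d, ginv c d * (∑ f, ∑ k, A a c f * ginv f k * A b d k))
      - (∑ c, ∑ d, ginv c d * (∑ f, ∑ k, A a d f * ginv f k * A b c k))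
      + g a b * (∑ c, ∑ d, ginv c d * (∑ e, ∑ i, ∑ f, ∑ k, ginv e i * ginv f k * A e c f * A i d k))
      + (1/2) * S * (∑ c, ∑ d, ginv c d * g c d)
      - (1/4) * g a b * X * (∑ c, ∑ d, ginv c d * g c d) := by
        simp only [Finset.sum_add_distrib, Finset.sum_sub_distrib, Finset.sum_neg_distrib,
          ← Finset.mul_sum]
    _ = 0 := by
        rw [h1, h2, h3, htr]
        ring
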